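/- Let S be a self-dual word over {+,-,*} (S = S̄) and k a positive integer. Set P = (S**)^k S, Q = S+(S**)^{k-1}S and R = S-(S**)^{k-1}S. Then every word W over {+,-,*} with W ≥ Q and W ≥ R satisfies W ≥ P. (Consequently the cycle C((S**)^k S +) fails the path condition.) -/

import Mathlib

inductive Symb : Type
  | plus | minus | star
deriving DecidableEq


/-- the dual of a symbol: `+` ↦ `-`, `-` ↦ `+`, `*` ↦ `*` -/
def dualSym : Symb → Symb
  | Symb.plus => Symb.minus
  | Symb.minus => Symb.plus
  | Symb.star => Symb.star

/-- the dual (involution) of a word: reverse and dualize each symbol -/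
def dualWord (W : List Symb) : List Symb := (W.map dualSym).reverse

/-- the arc relation of the reflexive path `P(W)` on vertices `{0,…,|W|}` -/
def pathArc (W : List Symb) (i j : ℕ) : Prop :=
  i ≤ W.length ∧ j ≤ W.length ∧
    (i = j ∨ (j = i + 1 ∧ (W[i]? = some Symb.plus ∨ W[i]? = some Symb.star))
           ∨ (i = j + 1 ∧ (W[j]? = some Symb.minus ∨ W[j]? = some Symb.star)))

/-- `f` is an end-point preserving homomorphism from the path `P(V)` onto the path `P(U)` -/
def EPHom (V U : List Symb) (f : ℕ → ℕ) : Prop :=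
  f 0 = 0 ∧ f V.length = U.length ∧
  (∀ i j, pathArc V i j → pathArc U (f i) (f j)) ∧
  (∀ m, m ≤ U.length → ∃ i, i ≤ V.length ∧ f i = m)

/-- the order on words: `U ≤ V` iff there is an end-point preserving
homomorphism from `P(V)` onto `P(U)` -/
def wle (U V : List Symb) : Prop := ∃ f, EPHom V U f

/-- `repS S k` is the word `(S**)^k S`. -/
def repS (S : List Symb) (k : ℕ) : List Symb :=
  (List.replicate k (S ++ [Symb.star, Symb.star])).flatten ++ S

/-!
Write `s = |S|` and `T = (S**)^{k-1}S`, and let `f`, `g` be end-point preserving homomorphisms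
from `P(W)` onto `P(S+T)` and `P(S-T)`. If at some time `t₀` the walk `f` has passed the middle
letter (`f t₀ > s`) while `g` has not (`g t₀ ≤ s`), then follow `f` clamped above at `s + 1` up
to `t₀`, and afterwards `g` shifted by one and clamped below at `s + 1`: both halves agree at
`t₀` (with value `s + 1`), and since the two `*`s of `S**T` carry arcs in both directions, this
is a homomorphism onto `P(S**T)`. Such a time exists for `(f, g)` or for `(g, f)`: at the first
step where `f` crosses the middle letter, `g` cannot cross it at the same step, since the arc of
`P(W)` between the two times would go to the middle `+` of `S+T` or the middle `-` of `S-T`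
against its direction.
-/

theorem exists_up_crossing {f : ℕ → ℕ} {n a : ℕ} (hstep : ∀ t < n, f (t + 1) ≤ f t + 1)
    (h0 : f 0 ≤ a) (hn : a < f n) : ∃ t < n, f t = a ∧ f (t + 1) = a + 1 := by
  induction n with
  | zero => omega
  | succ n ih =>
    by_cases h : a < f n
    · obtain ⟨t, ht, hft⟩ := ih (fun t ht => hstep t (by omega)) h
      exact ⟨t, by omega, hft⟩
    · have := hstep n (by omega)
      exact ⟨n, by omega, by omega, by omega⟩

theorem exists_eq_of_succ_le {f : ℕ → ℕ} {n m : ℕ} (hstep : ∀ t < n, f (t + 1) ≤ f t + 1)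
    (h0 : f 0 ≤ m) (hm : m ≤ f n) : ∃ i ≤ n, f i = m := by
  rcases h0.eq_or_lt with h0 | h0
  · exact ⟨0, Nat.zero_le n, h0⟩
  · obtain ⟨t, ht, -, hft⟩ := exists_up_crossing (a := m - 1) hstep (by omega) (by omega)
    exact ⟨t + 1, ht, by omega⟩

section PathArc

variable {U V : List Symb} {u v : ℕ}

theorem pathArc_self (hu : u ≤ U.length) : pathArc U u u :=
  ⟨hu, hu, Or.inl rfl⟩

theorem pathArc.le_add_one (h : pathArc U u v) : u ≤ v + 1 ∧ v ≤ u + 1 := by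
  obtain ⟨-, -, h | ⟨h, -⟩ | ⟨h, -⟩⟩ := h <;> omega

theorem pathArc_succ_right_iff :
    pathArc U u (u + 1) ↔ U[u]? = some Symb.plus ∨ U[u]? = some Symb.star := by
  constructor
  · rintro ⟨-, -, h | ⟨-, h⟩ | ⟨h, -⟩⟩ <;> first | exact h | omega
  · intro h
    have hu : u < U.length := by
      rcases h with h | h <;> exact (List.getElem?_eq_some_iff.1 h).fst
    exact ⟨hu.le, hu, Or.inr (Or.inl ⟨rfl, h⟩)⟩

theorem pathArc_succ_left_iff :
    pathArc U (u + 1) u ↔ U[u]? = some Symb.minus ∨ U[u]? = some Symb.star := by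
  constructor
  · rintro ⟨-, -, h | ⟨h, -⟩ | ⟨-, h⟩⟩ <;> first | exact h | omega
  · intro h
    have hu : u < U.length := by
      rcases h with h | h <;> exact (List.getElem?_eq_some_iff.1 h).fst
    exact ⟨hu, hu.le, Or.inr (Or.inr ⟨rfl, h⟩)⟩

theorem pathArc_succ_right_or_left (hu : u < U.length) :
    pathArc U u (u + 1) ∨ pathArc U (u + 1) u := by
  rw [pathArc_succ_right_iff, pathArc_succ_left_iff, List.getElem?_eq_getElem hu]
  cases U[u] <;> simp

theorem pathArc_map {F : ℕ → ℕ} (hF : ∀ u ≤ U.length, F u ≤ V.length)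
    (hstep : ∀ u < U.length, F (u + 1) = F u ∨
      F (u + 1) = F u + 1 ∧ (V[F u]? = U[u]? ∨ V[F u]? = some Symb.star))
    (h : pathArc U u v) : pathArc V (F u) (F v) := by
  obtain ⟨hu, hv, rfl | ⟨rfl, hl⟩ | ⟨rfl, hl⟩⟩ := h
  · exact pathArc_self (hF u hu)
  · rcases hstep u (by omega) with he | ⟨he, hV⟩
    · rw [he]; exact pathArc_self (hF u hu)
    · rw [he, pathArc_succ_right_iff]
      rcases hV with hV | hV <;> rw [hV] <;> tauto
  · rcases hstep v (by omega) with he | ⟨he, hV⟩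
    · rw [he]; exact pathArc_self (hF v hv)
    · rw [he, pathArc_succ_left_iff]
      rcases hV with hV | hV <;> rw [hV] <;> tauto

theorem map_succ_le_of_pathArc {f : ℕ → ℕ} (harc : ∀ i j, pathArc U i j → pathArc V (f i) (f j))
    {t : ℕ} (ht : t < U.length) : f (t + 1) ≤ f t + 1 ∧ f t ≤ f (t + 1) + 1 := by
  rcases pathArc_succ_right_or_left ht with h | h
  · exact (harc _ _ h).le_add_one.symm
  · exact (harc _ _ h).le_add_one

theorem EPHom.of_map_pathArc {f : ℕ → ℕ} (h0 : f 0 = 0) (hL : f U.length = V.length)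
    (harc : ∀ i j, pathArc U i j → pathArc V (f i) (f j)) : EPHom U V f :=
  ⟨h0, hL, harc, fun _ hm =>
    exists_eq_of_succ_le (fun _ ht => (map_succ_le_of_pathArc harc ht).1) (by omega) (hL ▸ hm)⟩

end PathArc

section StarStar

variable {S T : List Symb} {c : Symb} {u v : ℕ}

theorem pathArc_min_starStar (h : pathArc (S ++ c :: T) u v) :
    pathArc (S ++ Symb.star :: Symb.star :: T) (min u (S.length + 1)) (min v (S.length + 1)) := by
  refine pathArc_map (F := fun u => min u (S.length + 1)) (fun u _ => ?_) (fun u hu => ?_) h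
  · simp only [List.length_append, List.length_cons]; omega
  · rcases lt_trichotomy u S.length with hlt | rfl | hgt
    · right
      refine ⟨by omega, Or.inl ?_⟩
      simp [min_eq_left (by omega : u ≤ S.length + 1), List.getElem?_append_left hlt]
    · right; simp
    · left; omega

theorem pathArc_max_starStar (h : pathArc (S ++ c :: T) u v) :
    pathArc (S ++ Symb.star :: Symb.star :: T)
      (max (u + 1) (S.length + 1)) (max (v + 1) (S.length + 1)) := by
  refine pathArc_map (F := fun u => max (u + 1) (S.length + 1)) (fun u hu => ?_) (fun u hu => ?_) h
  · simp only [List.length_append, List.length_cons] at hu ⊢; omega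
  · rcases lt_trichotomy u S.length with hlt | rfl | hgt
    · left; omega
    · right; simp
    · right
      obtain ⟨x, rfl⟩ : ∃ x, u = S.length + 1 + x := ⟨u - (S.length + 1), by omega⟩
      refine ⟨by omega, Or.inl ?_⟩
      simp only [max_eq_left (by omega : S.length + 1 ≤ S.length + 1 + x + 1)]
      rw [List.getElem?_append_right (by omega), List.getElem?_append_right (by omega),
        show S.length + 1 + x + 1 - S.length = x + 2 by omega,
        show S.length + 1 + x - S.length = x + 1 by omega]
      simp

theorem wle_starStar_of_crossing {W : List Symb} {d : Symb} {φ ψ : ℕ → ℕ}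
    (hφ : EPHom W (S ++ c :: T) φ) (hψ : EPHom W (S ++ d :: T) ψ) {t₀ : ℕ}
    (ht₀ : t₀ ≤ W.length) (hφt₀ : S.length + 1 ≤ φ t₀) (hψt₀ : ψ t₀ ≤ S.length) :
    wle (S ++ Symb.star :: Symb.star :: T) W := by
  obtain ⟨hφ0, -, hφarc, -⟩ := hφ
  obtain ⟨-, hψL, hψarc, -⟩ := hψ
  let h t := if t ≤ t₀ then min (φ t) (S.length + 1) else max (ψ t + 1) (S.length + 1)
  have h_of_le : ∀ t ≤ t₀, h t = min (φ t) (S.length + 1) := fun t ht => if_pos ht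
  have h_of_ge : ∀ t, t₀ ≤ t → h t = max (ψ t + 1) (S.length + 1) := by
    intro t ht
    rcases ht.eq_or_lt with rfl | ht
    · rw [h_of_le t₀ le_rfl]; omega
    · exact if_neg (by omega)
  refine ⟨h, EPHom.of_map_pathArc ?_ ?_ fun i j hij => ?_⟩
  · rw [h_of_le 0 (Nat.zero_le _), hφ0]; simp
  · simp only [List.length_append, List.length_cons] at hψL ⊢
    rw [h_of_ge _ ht₀, hψL]; omega
  · have := hij.le_add_one
    by_cases hi : i ≤ t₀ ∧ j ≤ t₀
    · rw [h_of_le i hi.1, h_of_le j hi.2]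
      exact pathArc_min_starStar (hφarc i j hij)
    · rw [h_of_ge i (by omega), h_of_ge j (by omega)]
      exact pathArc_max_starStar (hψarc i j hij)

theorem wle_starStar_of_wle_plus_of_wle_minus {W : List Symb}
    (hP : wle (S ++ Symb.plus :: T) W) (hM : wle (S ++ Symb.minus :: T) W) :
    wle (S ++ Symb.star :: Symb.star :: T) W := by
  obtain ⟨f, hf⟩ := hP
  obtain ⟨g, hg⟩ := hM
  obtain ⟨t, ht, hft, hft'⟩ : ∃ t < W.length, f t = S.length ∧ f (t + 1) = S.length + 1 :=
    exists_up_crossing (fun t ht => (map_succ_le_of_pathArc hf.2.2.1 ht).1)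
      (by rw [hf.1]; omega) (by rw [hf.2.1]; simp)
  by_cases hgt : S.length + 1 ≤ g t
  · exact wle_starStar_of_crossing hg hf ht.le hgt hft.le
  by_cases hgt' : g (t + 1) ≤ S.length
  · exact wle_starStar_of_crossing hf hg ht hft'.ge hgt'
  have hg_step := map_succ_le_of_pathArc hg.2.2.1 ht
  exfalso
  rcases pathArc_succ_right_or_left ht with ha | ha
  · have := hg.2.2.1 _ _ ha
    rw [show g t = S.length by omega, show g (t + 1) = S.length + 1 by omega,
      pathArc_succ_right_iff] at this
    simp at this
  · have := hf.2.2.1 _ _ ha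
    rw [hft, hft', pathArc_succ_left_iff] at this
    simp at this

end StarStar

theorem repS_succ (S : List Symb) (k : ℕ) :
    repS S (k + 1) = S ++ Symb.star :: Symb.star :: repS S k := by
  simp [repS, List.replicate_succ]

theorem stmt_19_general (S : List Symb) (k : ℕ) (hk : 1 ≤ k)
    (W : List Symb)
    (hQ : wle (S ++ Symb.plus :: repS S (k - 1)) W)
    (hR : wle (S ++ Symb.minus :: repS S (k - 1)) W) :
    wle (repS S k) W := by
  obtain ⟨k, rfl⟩ := Nat.exists_eq_add_of_le' hk
  rw [repS_succ]
  exact wle_starStar_of_wle_plus_of_wle_minus hQ hR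

/-- For `S` self-dual and `k ≥ 1`, any word `W` with `W ≥ S+(S**)^{k-1}S` and
`W ≥ S-(S**)^{k-1}S` also satisfies `W ≥ (S**)^k S`; hence the cycle
`C((S**)^k S +)` fails the path condition. -/
theorem stmt_19 (S : List Symb) (hS : dualWord S = S) (k : ℕ) (hk : 1 ≤ k)
    (W : List Symb)
    (hQ : wle (S ++ Symb.plus :: repS S (k - 1)) W)
    (hR : wle (S ++ Symb.minus :: repS S (k - 1)) W) :
    wle (repS S k) W :=
  stmt_19_general S k hk W hQ hR
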